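/- If φ : (G,P) → (G',P') is an essentially surjective fibration of networks (in particular, if φ is surjective on vertices), then the pullback map φ* : V(G',P') → V(G,P) between spaces of groupoid-invariant virtual vector fields is a linear isomorphism. -/

import Mathlib

open Manifold

structure DGraph where
  V : Type
  E : Type
  src : E → V
  tgt : E → V

/-- A map of directed multigraphs: functions on edges and vertices commuting with
source and target. -/
structure GraphMap (G G' : DGraph) where
  vmap : G.V → G'.V
  emap : G.E → G'.E
  src_eq : ∀ e, G'.src (emap e) = vmap (G.src e)
  tgt_eq : ∀ e, G'.tgt (emap e) = vmap (G.tgt e)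

/-- `φ` is a graph fibration if for every vertex `a` of `G` and every edge `e'` of `G'`
with target `φ(a)`, there is a unique edge `e` of `G` with target `a` and `φ(e) = e'`. -/
def GraphMap.IsFibration {G G' : DGraph} (φ : GraphMap G G') : Prop :=
  ∀ (a : G.V) (e' : G'.E), G'.tgt e' = φ.vmap a →
    ∃! e : G.E, G.tgt e = a ∧ φ.emap e = e'

/-- The set of edges of `G` with target `a`. -/
abbrev inEdges (G : DGraph) (a : G.V) : Type := {e : G.E // G.tgt e = a}

/-- The input tree `I(a)` of a vertex `a`: its vertices are `{a} ⊔ t⁻¹(a)` (the root `a`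
is encoded as `none`, the leaf `γ ∈ t⁻¹(a)` as `some γ`), its edges are the pairs `(a, γ)`
for `γ ∈ t⁻¹(a)`, with source `γ` and target the root `a`. -/
def inputTree (G : DGraph) (a : G.V) : DGraph where
  V := Option (inEdges G a)
  E := inEdges G a
  src := fun γ => some γ
  tgt := fun _ => none

/-- An isomorphism of graphs is a graph map bijective on vertices and on edges. -/
def GraphMap.IsIso {G G' : DGraph} (φ : GraphMap G G') : Prop :=
  Function.Bijective φ.vmap ∧ Function.Bijective φ.emap


/-- An isomorphism of input networks `(I(a), P ∘ ξ_a) → (I(a'), P' ∘ ξ_{a'})`.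
Since any isomorphism of height-1 trees sends root to root and is determined by its
action on the leaves (equivalently, on the edges), it is given by a bijection `e` of the
sets of incoming edges; the network (phase-preserving) condition says that the root
phases agree (`hr`) and the phases of corresponding leaves agree (`hl`). -/
structure InputIso {ι : Type} (G : DGraph) (P : G.V → ι) (G' : DGraph) (P' : G'.V → ι)
    (a : G.V) (a' : G'.V) where
  e : inEdges G a ≃ inEdges G' a'
  hr : P' a' = P a
  hl : ∀ γ : inEdges G a, P' (G'.src ((e γ) : inEdges G' a').1) = P (G.src γ.1)

/-- The identity isomorphism of an input network. -/
def InputIso.refl {ι : Type} (G : DGraph) (P : G.V → ι) (a : G.V) :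
    InputIso G P G P a a :=
  ⟨Equiv.refl _, rfl, fun _ => rfl⟩

/-- Composition of isomorphisms of input networks. -/
def InputIso.comp {ι : Type} {G : DGraph} {P : G.V → ι} {G' : DGraph} {P' : G'.V → ι}
    {G'' : DGraph} {P'' : G''.V → ι} {a : G.V} {a' : G'.V} {a'' : G''.V}
    (σ : InputIso G P G' P' a a') (σ' : InputIso G' P' G'' P'' a' a'') :
    InputIso G P G'' P'' a a'' :=
  ⟨σ.e.trans σ'.e, σ'.hr.trans σ.hr, fun γ => (σ'.hl (σ.e γ)).trans (σ.hl γ)⟩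

/-- The inverse of an isomorphism of input networks. -/
def InputIso.inv {ι : Type} {G : DGraph} {P : G.V → ι} {G' : DGraph} {P' : G'.V → ι}
    {a : G.V} {a' : G'.V} (σ : InputIso G P G' P' a a') : InputIso G' P' G P a' a :=
  ⟨σ.e.symm, σ.hr.symm, fun γ' => by
    have h := σ.hl (σ.e.symm γ')
    rw [Equiv.apply_symm_apply] at h
    exact h.symm⟩

variable {ι : Type} {EE : ι → Type} [∀ i, NormedAddCommGroup (EE i)]
  [∀ i, NormedSpace ℝ (EE i)] {HH : ι → Type} [∀ i, TopologicalSpace (HH i)]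
  (II : ∀ i, ModelWithCorners ℝ (EE i) (HH i))
  (MM : ι → Type) [∀ i, TopologicalSpace (MM i)] [∀ i, ChartedSpace (HH i) (MM i)]
  [∀ i, IsManifold (II i) (⊤ : ℕ∞) (MM i)]

/-- The total phase space `P I(a) = P(a) × ⊓_{γ ∈ t⁻¹(a)} P(s(γ))` of the input network
of the vertex `a` of the network `(G, P)` (phase spaces drawn from the family of
manifolds `MM` via the index function `P : G.V → ι`). -/
abbrev PIn (G : DGraph) (P : G.V → ι) (a : G.V) : Type :=
  MM (P a) × ((γ : inEdges G a) → MM (P (G.src γ.1)))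

/-- The underlying (not necessarily smooth) sections of the control space
`Ctrl(P I(a) → P a)`: maps `F` from `P I(a)` to the tangent bundle of `P a = P(a)` with
`F q ∈ T_{p(q)} P(a)`, where `p : P I(a) → P(a)` is the projection onto the root factor. -/
abbrev Raw (G : DGraph) (P : G.V → ι) (a : G.V) : Type :=
  (q : PIn MM G P a) → TangentSpace (II (P a)) q.1

/-- The model with corners for the manifold `P I(a)`. -/
noncomputable def PInModel (G : DGraph) [Fintype G.E] [DecidableEq G.V]
    (P : G.V → ι) (a : G.V) :
    ModelWithCorners ℝ (EE (P a) × ((γ : inEdges G a) → EE (P (G.src γ.1))))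
      (ModelProd (HH (P a)) (ModelPi fun γ : inEdges G a => HH (P (G.src γ.1)))) :=
  (II (P a)).prod (ModelWithCorners.pi fun γ : inEdges G a => II (P (G.src γ.1)))

/-- Smoothness of an element of `Ctrl(P I(a) → P a)`, as a map into the tangent bundle.
`Ctrl(P I(a) → P a)` is the vector space of smooth maps `F : P I(a) → T P(a)` with
`F q ∈ T_{p(q)} P(a)`, i.e. the subspace of smooth elements of `Raw`. -/
def IsSmoothCtrl (G : DGraph) [Fintype G.E] [DecidableEq G.V] (P : G.V → ι) (a : G.V)
    (F : Raw II MM G P a) : Prop :=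
  ContMDiff (PInModel II G P a) (II (P a)).tangent (⊤ : ℕ∞)
    (fun q => Bundle.TotalSpace.mk q.1 (F q) :
      PIn MM G P a → TangentBundle (II (P a)) (MM (P a)))

/-- The map `P φ : P I(a') → P I(a)` of total phase spaces of input networks induced
(contravariantly) by an isomorphism `φ` of input networks. -/
def phaseIn {G : DGraph} {P : G.V → ι} {G' : DGraph} {P' : G'.V → ι} {a : G.V}
    {a' : G'.V} (σ : InputIso G P G' P' a a') : PIn MM G' P' a' → PIn MM G P a :=
  fun q => (cast (congrArg MM σ.hr) q.1,
    fun γ => cast (congrArg MM (σ.hl γ)) (q.2 (σ.e γ)))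

/-- Transport of tangent vectors along an equality of phase space indices; this is the
differential of the induced diffeomorphism of phase spaces (a `cast`). -/
def tcast {i j : ι} (h : i = j) {x : MM i} {y : MM j} (v : TangentSpace (II i) x) :
    TangentSpace (II j) y :=
  cast (congrArg EE h) v

/-- The map `Ctrl(φ) : Ctrl(P I(a) → P a) → Ctrl(P I(a') → P a')`,
`Ctrl(φ)(F) = D(P(φ|ₐ))⁻¹ ∘ F ∘ P φ`, induced by an isomorphism `φ` of input networks:
here `P(φ|ₐ) : P(a') → P(a)` is the diffeomorphism (a `cast`) induced by the restriction
of `φ` to the root, and its differential is `tcast`. -/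
def ctrlMap {G : DGraph} {P : G.V → ι} {G' : DGraph} {P' : G'.V → ι} {a : G.V}
    {a' : G'.V} (σ : InputIso G P G' P' a a') :
    Raw II MM G P a → Raw II MM G' P' a' :=
  fun F q' => tcast II MM σ.hr.symm (F (phaseIn MM σ q'))

/-- A virtual vector field on the network `(G, P)`, i.e. a section of the control bundle,
is smooth if each of its components is a smooth control system. -/
def IsSmoothSec (G : DGraph) [Fintype G.E] [DecidableEq G.V] (P : G.V → ι)
    (w : ∀ a, Raw II MM G P a) : Prop :=
  ∀ a, IsSmoothCtrl II MM G P a (w a)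

/-- A virtual vector field `w` on `(G, P)` is invariant under the symmetry groupoid if
`Ctrl(σ) (w a) = w b` for every isomorphism `σ : (I(a), P∘ξ_a) → (I(b), P∘ξ_b)` of input
networks.  Together with smoothness this cuts out `V(G,P) ⊆ S(G,P)`. -/
def IsInvariantSec (G : DGraph) (P : G.V → ι) (w : ∀ a, Raw II MM G P a) : Prop :=
  ∀ (a b : G.V) (σ : InputIso G P G P a b), ctrlMap II MM σ (w a) = w b

/-- The isomorphism of input networks `φ_a : (I(a), P∘ξ_a) → (I(φ(a)), P'∘ξ_{φ(a)})`
induced by a fibration of networks `φ : (G,P) → (G',P')`. -/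
noncomputable def fibIso {G G' : DGraph} (φ : GraphMap G G') (hφ : φ.IsFibration)
    {P : G.V → ι} {P' : G'.V → ι} (h : ∀ a, P' (φ.vmap a) = P a) (a : G.V) :
    InputIso G P G' P' a (φ.vmap a) where
  e :=
    { toFun := fun γ => ⟨φ.emap γ.1, by rw [φ.tgt_eq, γ.2]⟩
      invFun := fun γ' => ⟨Exists.choose (hφ a γ'.1 γ'.2),
        (Exists.choose_spec (hφ a γ'.1 γ'.2)).1.1⟩
      left_inv := fun γ => Subtype.ext
        (((Exists.choose_spec (hφ a (φ.emap γ.1) (by rw [φ.tgt_eq, γ.2]))).2 γ.1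
          ⟨γ.2, rfl⟩).symm)
      right_inv := fun γ' => Subtype.ext
        (Exists.choose_spec (hφ a γ'.1 γ'.2)).1.2 }
  hr := h a
  hl := fun γ => by
    show P' (G'.src (φ.emap γ.1)) = P (G.src γ.1)
    rw [φ.src_eq]; exact h _

/-- The pullback map `φ* : S(G',P') → S(G,P)` of virtual vector fields along a fibration
of networks `φ`, defined by `(φ* w')_a = Ctrl(φ_a)⁻¹ (w'_{φ(a)})`. -/
noncomputable def pullbackVF {G G' : DGraph} (φ : GraphMap G G') (hφ : φ.IsFibration)
    {P : G.V → ι} {P' : G'.V → ι} (h : ∀ a, P' (φ.vmap a) = P a)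
    (w' : ∀ a', Raw II MM G' P' a') : ∀ a, Raw II MM G P a :=
  fun a => ctrlMap II MM (fibIso φ hφ h a).inv (w' (φ.vmap a))

/-! For a groupoid-invariant field `w`, the transport `Ctrl(σ) (w a)` along an isomorphism of
input networks `σ : I(a) → I(c)` depends only on the target `c`: two such transports differ by
an element `I(a) → I(b)` of the symmetry groupoid, under which `w` is invariant. Essential
surjectivity gives, for every vertex `a'` of `G'`, a vertex `s a'` of `G` and an isomorphism
`I(s a') → I(φ (s a')) ≅ I(a')`; transporting `w` along these defines a field on `G'` that is
invariant, and it is a two-sided inverse of `φ*` on invariant fields by the same principle.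
Smoothness is preserved because `Ctrl(σ)` only recasts the root and reindexes the leaf factors
of the phase space `P I(a)`, and both projections from and coordinatewise smooth maps into a
finite product of manifolds are smooth. -/

section PiManifold

open Set

variable {𝕜 : Type*} [NontriviallyNormedField 𝕜] {κ : Type*} [Fintype κ]
  {E : κ → Type*} [∀ k, NormedAddCommGroup (E k)] [∀ k, NormedSpace 𝕜 (E k)]
  {H : κ → Type*} [∀ k, TopologicalSpace (H k)] {I : ∀ k, ModelWithCorners 𝕜 (E k) (H k)}
  {M : κ → Type*} [∀ k, TopologicalSpace (M k)] [∀ k, ChartedSpace (H k) (M k)]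
  {E' : Type*} [NormedAddCommGroup E'] [NormedSpace 𝕜 E'] {H' : Type*} [TopologicalSpace H']
  {J : ModelWithCorners 𝕜 E' H'} {N : Type*} [TopologicalSpace N] [ChartedSpace H' N]
  {n : WithTop ℕ∞}

theorem range_modelWithCorners_pi :
    range (ModelWithCorners.pi I) = univ.pi fun k => range (I k) :=
  range_piMap fun k => I k

theorem contMDiff_pi {f : N → ∀ k, M k} (hf : ∀ k, ContMDiff J (I k) n fun z => f z k) :
    ContMDiff J (ModelWithCorners.pi I) n f := by
  intro z
  rw [contMDiffAt_iff]
  exact ⟨continuousAt_pi.2 fun k => (hf k z).continuousAt,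
    contDiffWithinAt_pi.2 fun k => (contMDiffAt_iff.1 (hf k z)).2⟩

theorem contMDiff_apply [∀ k, IsManifold (I k) n (M k)] (k : κ) :
    ContMDiff (ModelWithCorners.pi I) (I k) n fun q : ∀ k, M k => q k := by
  intro x
  rw [contMDiffAt_iff]
  refine ⟨(continuous_apply k).continuousAt, ?_⟩
  have hproj : ContDiff 𝕜 n fun p : ∀ k, E k => p k :=
    (ContinuousLinearMap.proj (R := 𝕜) (φ := E) k).contDiff
  refine (contDiffWithinAt_ext_coord_change (x k) (x k) ?_).comp _ hproj.contDiffWithinAt ?_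
  · change extChartAt (I k) (x k) (x k) ∈ _
    refine ⟨mem_extChartAt_target (x k), ?_⟩
    simp only [mem_preimage, PartialEquiv.symm_symm, extChartAt_to_inv]
    exact mem_extChartAt_source (x k)
  · intro p hp
    rw [range_modelWithCorners_pi] at hp
    exact hp k (mem_univ k)

end PiManifold

section InputIso

variable {G : DGraph} {P : G.V → ι} {G' : DGraph} {P' : G'.V → ι}
  {G'' : DGraph} {P'' : G''.V → ι} {a : G.V} {a' : G'.V} {a'' : G''.V}

@[ext]
theorem InputIso.ext {σ₁ σ₂ : InputIso G P G' P' a a'} (h : σ₁.e = σ₂.e) : σ₁ = σ₂ := by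
  cases σ₁; cases σ₂; cases h; rfl

theorem InputIso.comp_inv_comp (σ₁ : InputIso G P G'' P'' a a'')
    (σ₂ : InputIso G' P' G'' P'' a' a'') : (σ₁.comp σ₂.inv).comp σ₂ = σ₁ := by
  ext1; simp [InputIso.comp, InputIso.inv, Equiv.trans_assoc]

theorem phaseIn_phaseIn (M : ι → Type) (σ : InputIso G P G' P' a a')
    (σ' : InputIso G' P' G'' P'' a' a'') (q : PIn M G'' P'' a'') :
    phaseIn M σ (phaseIn M σ' q) = phaseIn M (σ.comp σ') q :=
  Prod.ext (cast_cast _ _ _) (funext fun _ => cast_cast _ _ _)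

end InputIso

section ControlMaps

variable {E : ι → Type} [∀ i, NormedAddCommGroup (E i)] [∀ i, NormedSpace ℝ (E i)]
  {H : ι → Type} [∀ i, TopologicalSpace (H i)] (I : ∀ i, ModelWithCorners ℝ (E i) (H i))
  (M : ι → Type) [∀ i, TopologicalSpace (M i)] [∀ i, ChartedSpace (H i) (M i)]
  {G : DGraph} {P : G.V → ι} {G' : DGraph} {P' : G'.V → ι}
  {G'' : DGraph} {P'' : G''.V → ι} {a : G.V} {a' : G'.V} {a'' : G''.V}

theorem tcast_tcast {i j k : ι} (h₁ : i = j) (h₂ : j = k) {x : M i} {y : M j} {z : M k}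
    (v : TangentSpace (I i) x) :
    (tcast I M h₂ (tcast I M h₁ v : TangentSpace (I j) y) : TangentSpace (I k) z) =
      tcast I M (h₁.trans h₂) v := by
  subst h₁ h₂; rfl

theorem tcast_add {i j : ι} (h : i = j) {x : M i} {y : M j} (v w : TangentSpace (I i) x) :
    (tcast I M h (v + w) : TangentSpace (I j) y) = tcast I M h v + tcast I M h w := by
  subst h; rfl

theorem tcast_smul {i j : ι} (h : i = j) {x : M i} {y : M j} (c : ℝ)
    (v : TangentSpace (I i) x) :
    (tcast I M h (c • v) : TangentSpace (I j) y) = c • tcast I M h v := by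
  subst h; rfl

theorem ctrlMap_ctrlMap (σ : InputIso G P G' P' a a') (σ' : InputIso G' P' G'' P'' a' a'')
    (F : Raw I M G P a) : ctrlMap I M σ' (ctrlMap I M σ F) = ctrlMap I M (σ.comp σ') F :=
  funext fun q => (tcast_tcast I M _ _ _).trans
    (congrArg (tcast I M _) (congrArg F (phaseIn_phaseIn M σ σ' q)))

theorem ctrlMap_add (σ : InputIso G P G' P' a a') (F₁ F₂ : Raw I M G P a) :
    ctrlMap I M σ (F₁ + F₂) = ctrlMap I M σ F₁ + ctrlMap I M σ F₂ :=
  funext fun _ => tcast_add I M _ _ _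

theorem ctrlMap_smul (σ : InputIso G P G' P' a a') (c : ℝ) (F : Raw I M G P a) :
    ctrlMap I M σ (c • F) = c • ctrlMap I M σ F :=
  funext fun _ => tcast_smul I M _ _ _

theorem IsInvariantSec.ctrlMap_eq {w : ∀ a, Raw I M G P a} (hw : IsInvariantSec I M G P w)
    {b : G.V} (σ₁ : InputIso G P G' P' a a') (σ₂ : InputIso G P G' P' b a') :
    ctrlMap I M σ₁ (w a) = ctrlMap I M σ₂ (w b) := by
  rw [← InputIso.comp_inv_comp σ₁ σ₂, ← ctrlMap_ctrlMap, hw]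

theorem contMDiff_tcast_comp_reindex [∀ i, IsManifold (I i) (⊤ : ℕ∞) (M i)] {κ κ' : Type}
    [Fintype κ] [Fintype κ'] (e : κ ≃ κ') {i i' : ι} (hi : i' = i) {f : κ → ι} {f' : κ' → ι}
    (hf : ∀ γ, f' (e γ) = f γ) (F : (q : M i × ((γ : κ) → M (f γ))) → TangentSpace (I i) q.1)
    (hF : ContMDiff ((I i).prod (ModelWithCorners.pi fun γ => I (f γ))) (I i).tangent
      (⊤ : ℕ∞) (fun q => Bundle.TotalSpace.mk q.1 (F q) :
        M i × ((γ : κ) → M (f γ)) → TangentBundle (I i) (M i))) :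
    ContMDiff ((I i').prod (ModelWithCorners.pi fun γ' => I (f' γ'))) (I i').tangent (⊤ : ℕ∞)
      (fun q' => Bundle.TotalSpace.mk q'.1 (tcast I M hi.symm (F (cast (congrArg M hi) q'.1,
          fun γ => cast (congrArg M (hf γ)) (q'.2 (e γ))))) :
        M i' × ((γ' : κ') → M (f' γ')) → TangentBundle (I i') (M i')) := by
  subst hi
  obtain rfl : f = fun γ => f' (e γ) := funext fun γ => (hf γ).symm
  exact hF.comp (contMDiff_fst.prodMk
    (contMDiff_pi fun γ => (contMDiff_apply (e γ)).comp contMDiff_snd))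

theorem IsSmoothCtrl.ctrlMap [∀ i, IsManifold (I i) (⊤ : ℕ∞) (M i)] [Fintype G.E]
    [DecidableEq G.V] [Fintype G'.E] [DecidableEq G'.V] (σ : InputIso G P G' P' a a')
    {F : Raw I M G P a} (hF : IsSmoothCtrl I M G P a F) :
    IsSmoothCtrl I M G' P' a' (ctrlMap I M σ F) :=
  contMDiff_tcast_comp_reindex I M σ.e σ.hr σ.hl F hF

def pushforwardVF (s : G'.V → G.V) (σ : ∀ a', InputIso G P G' P' (s a') a')
    (w : ∀ a, Raw I M G P a) : ∀ a', Raw I M G' P' a' :=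
  fun a' => ctrlMap I M (σ a') (w (s a'))

theorem IsSmoothSec.pushforwardVF [∀ i, IsManifold (I i) (⊤ : ℕ∞) (M i)] [Fintype G.E]
    [DecidableEq G.V] [Fintype G'.E] [DecidableEq G'.V] (s : G'.V → G.V)
    (σ : ∀ a', InputIso G P G' P' (s a') a') {w : ∀ a, Raw I M G P a}
    (hw : IsSmoothSec I M G P w) : IsSmoothSec I M G' P' (pushforwardVF I M s σ w) :=
  fun a' => (hw (s a')).ctrlMap I M (σ a')

theorem IsInvariantSec.pushforwardVF (s : G'.V → G.V) (σ : ∀ a', InputIso G P G' P' (s a') a')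
    {w : ∀ a, Raw I M G P a} (hw : IsInvariantSec I M G P w) :
    IsInvariantSec I M G' P' (pushforwardVF I M s σ w) :=
  fun _ _ _ => (ctrlMap_ctrlMap I M _ _ _).trans (hw.ctrlMap_eq I M _ _)

variable (φ : GraphMap G G') (hφ : φ.IsFibration) (h : ∀ a, P' (φ.vmap a) = P a)

theorem pullbackVF_add (w₁ w₂ : ∀ a', Raw I M G' P' a') :
    pullbackVF I M φ hφ h (w₁ + w₂) = pullbackVF I M φ hφ h w₁ + pullbackVF I M φ hφ h w₂ :=
  funext fun a => ctrlMap_add I M _ (w₁ (φ.vmap a)) (w₂ (φ.vmap a))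

theorem pullbackVF_smul (c : ℝ) (w' : ∀ a', Raw I M G' P' a') :
    pullbackVF I M φ hφ h (c • w') = c • pullbackVF I M φ hφ h w' :=
  funext fun a => ctrlMap_smul I M _ c (w' (φ.vmap a))

theorem IsSmoothSec.pullbackVF [∀ i, IsManifold (I i) (⊤ : ℕ∞) (M i)] [Fintype G.E]
    [DecidableEq G.V] [Fintype G'.E] [DecidableEq G'.V] {w' : ∀ a', Raw I M G' P' a'}
    (hw' : IsSmoothSec I M G' P' w') : IsSmoothSec I M G P (pullbackVF I M φ hφ h w') :=
  fun a => (hw' (φ.vmap a)).ctrlMap I M _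

theorem IsInvariantSec.pullbackVF {w' : ∀ a', Raw I M G' P' a'}
    (hw' : IsInvariantSec I M G' P' w') : IsInvariantSec I M G P (pullbackVF I M φ hφ h w') :=
  fun _ _ _ => (ctrlMap_ctrlMap I M _ _ _).trans (hw'.ctrlMap_eq I M _ _)

theorem pullbackVF_pushforwardVF (s : G'.V → G.V) (σ : ∀ a', InputIso G P G' P' (s a') a')
    {w : ∀ a, Raw I M G P a} (hw : IsInvariantSec I M G P w) :
    pullbackVF I M φ hφ h (pushforwardVF I M s σ w) = w :=
  funext fun a => (ctrlMap_ctrlMap I M _ _ _).trans (hw.ctrlMap_eq I M _ (InputIso.refl G P a))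

theorem pushforwardVF_pullbackVF (s : G'.V → G.V) (σ : ∀ a', InputIso G P G' P' (s a') a')
    {w' : ∀ a', Raw I M G' P' a'} (hw' : IsInvariantSec I M G' P' w') :
    pushforwardVF I M s σ (pullbackVF I M φ hφ h w') = w' :=
  funext fun a' =>
    (ctrlMap_ctrlMap I M _ _ _).trans (hw'.ctrlMap_eq I M _ (InputIso.refl G' P' a'))

end ControlMaps

/-- **Essentially surjective fibrations induce isomorphisms on invariant virtual vector
fields.** If `φ : (G,P) → (G',P')` is an essentially surjective fibration of networks
(in particular, if `φ` is surjective on vertices), then the pullback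
`φ* : V(G',P') → V(G,P)` is a linear isomorphism: it is linear, maps `V(G',P')` into
`V(G,P)`, and every element of `V(G,P)` is the pullback of a unique element of
`V(G',P')`. -/
theorem pullback_iso_of_essentially_surjective
    {G G' : DGraph} [Fintype G.E] [DecidableEq G.V] [Fintype G'.E] [DecidableEq G'.V]
    (φ : GraphMap G G') (hφ : φ.IsFibration)
    {P : G.V → ι} {P' : G'.V → ι} (h : ∀ a, P' (φ.vmap a) = P a)
    (hess : ∀ a' : G'.V, ∃ a : G.V, Nonempty (InputIso G' P' G' P' a' (φ.vmap a))) :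
    (∀ w₁ w₂ : ∀ a', Raw II MM G' P' a',
      pullbackVF II MM φ hφ h (w₁ + w₂) =
        pullbackVF II MM φ hφ h w₁ + pullbackVF II MM φ hφ h w₂) ∧
    (∀ (c : ℝ) (w' : ∀ a', Raw II MM G' P' a'),
      pullbackVF II MM φ hφ h (c • w') = c • pullbackVF II MM φ hφ h w') ∧
    (∀ w' : ∀ a', Raw II MM G' P' a',
      IsSmoothSec II MM G' P' w' → IsInvariantSec II MM G' P' w' →
        IsSmoothSec II MM G P (pullbackVF II MM φ hφ h w') ∧
          IsInvariantSec II MM G P (pullbackVF II MM φ hφ h w')) ∧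
    (∀ w : ∀ a, Raw II MM G P a,
      IsSmoothSec II MM G P w → IsInvariantSec II MM G P w →
        ∃! w' : {w' : ∀ a', Raw II MM G' P' a' //
            IsSmoothSec II MM G' P' w' ∧ IsInvariantSec II MM G' P' w'},
          pullbackVF II MM φ hφ h w'.1 = w) := by
  choose s τ using hess
  let σ a' : InputIso G P G' P' (s a') a' := (fibIso φ hφ h (s a')).comp (τ a').some.inv
  refine ⟨pullbackVF_add II MM φ hφ h, pullbackVF_smul II MM φ hφ h,
    fun w' hs hi => ⟨hs.pullbackVF II MM φ hφ h, hi.pullbackVF II MM φ hφ h⟩,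
    fun w hs hi => ⟨⟨pushforwardVF II MM s σ w, hs.pushforwardVF II MM s σ,
      hi.pushforwardVF II MM s σ⟩, pullbackVF_pushforwardVF II MM φ hφ h s σ hi, ?_⟩⟩
  rintro ⟨w', -, hi'⟩ rfl
  exact Subtype.ext (pushforwardVF_pullbackVF II MM φ hφ h s σ hi').symm
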